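/- Let d = 2. Fix x ∈ D and z ∈ Δ^2 such that there exist x̃^1, x̃^2 with x̃^k ∈ z_k·D_{|k} for k = 1, 2 and x = x̃^1 + x̃^2. Then the maximum of Σ_{k=1}^2 (w^k · x̃^k + b^k z_k) over all pairs (x̃^1, x̃^2) with x̃^k ∈ z_k·D_{|k} for k = 1, 2 and x = x̃^1 + x̃^2 equals the maximum of the same objective over the larger feasible set of pairs (x̃^1, x̃^2) with x̃^k ∈ z_k·D for k = 1, 2 and x = x̃^1 + x̃^2. -/

import Mathlib

open scoped Pointwise

noncomputable section

/-- Dot product on `Fin n → ℝ`. -/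
def dotp {n : ℕ} (w x : Fin n → ℝ) : ℝ := ∑ i, w i * x i

/-- The affine function `f^k(x) = w^k ⬝ x + b^k`. -/
def affK {η d : ℕ} (w : Fin d → Fin η → ℝ) (b : Fin d → ℝ) (k : Fin d) (x : Fin η → ℝ) : ℝ :=
  dotp (w k) x + b k

/-- `D_{|k}`: the part of the domain where `f^k` attains the maximum. -/
def DrestrK {η d : ℕ} (D : Set (Fin η → ℝ)) (w : Fin d → Fin η → ℝ) (b : Fin d → ℝ)
    (k : Fin d) : Set (Fin η → ℝ) :=
  {x ∈ D | ∀ ℓ, affK w b ℓ x ≤ affK w b k x}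

/-!
Write a feasible pair as `x̃^k = z_k y^k` with `y^k ∈ D`. Since `x = ∑ z_k y^k` and `∑ z_k = 1`,
for every `ℓ` the objective equals `f^ℓ(x) + ∑_k z_k (f^k(y^k) - f^ℓ(y^k))`. For a restricted pair
every summand is nonnegative, so the restricted maximum is at least `max_ℓ f^ℓ(x)`. For a relaxed
pair with two pieces, either both summands with `k ≠ ℓ` are positive, which forces `z_k > 0` and
`y^k ∈ D_{|k}`, so the pair is restricted; or one of them is `≤ 0` and the value is at most
`f^ℓ(x)`. The restricted maximum exists because `D` is compact.
-/

lemma dotp_eq_dotProduct {n : ℕ} (w x : Fin n → ℝ) : dotp w x = w ⬝ᵥ x := rfl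

lemma continuous_affK {η d : ℕ} (w : Fin d → Fin η → ℝ) (b : Fin d → ℝ) (k : Fin d) :
    Continuous (affK w b k) := by
  unfold affK dotp
  fun_prop

lemma isClosed_setOf_forall_dotp_le {η m : ℕ} (A : Fin m → Fin η → ℝ) (c : Fin m → ℝ) :
    IsClosed {x | ∀ i, dotp (A i) x ≤ c i} := by
  simp only [Set.ofPred_forall]
  exact isClosed_iInter fun i => isClosed_le (by unfold dotp; fun_prop) continuous_const

lemma DrestrK_subset {η d : ℕ} {D : Set (Fin η → ℝ)} (w : Fin d → Fin η → ℝ) (b : Fin d → ℝ)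
    (k : Fin d) : DrestrK D w b k ⊆ D :=
  fun _ hy => hy.1

lemma isCompact_DrestrK {η d : ℕ} {D : Set (Fin η → ℝ)} (hDc : IsClosed D)
    (hDb : Bornology.IsBounded D) (w : Fin d → Fin η → ℝ) (b : Fin d → ℝ) (k : Fin d) :
    IsCompact (DrestrK D w b k) := by
  have hclosed : IsClosed (DrestrK D w b k) := by
    rw [show DrestrK D w b k = D ∩ ⋂ ℓ, {y | affK w b ℓ y ≤ affK w b k y} by
      ext y; simp [DrestrK]]
    exact hDc.inter <| isClosed_iInter fun ℓ =>
      isClosed_le (continuous_affK w b ℓ) (continuous_affK w b k)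
  exact Metric.isCompact_of_isClosed_isBounded hclosed (hDb.subset (DrestrK_subset w b k))

lemma exists_isGreatest_objective_of_isCompact {η d : ℕ} {C : Fin d → Set (Fin η → ℝ)}
    (hC : ∀ k, IsCompact (C k)) (w : Fin d → Fin η → ℝ) (b : Fin d → ℝ) (x : Fin η → ℝ)
    (z : Fin d → ℝ) (hne : ∃ xt : Fin d → Fin η → ℝ, (∀ k, xt k ∈ z k • C k) ∧ x = ∑ k, xt k) :
    ∃ m, IsGreatest {s : ℝ | ∃ xt : Fin d → Fin η → ℝ, (∀ k, xt k ∈ z k • C k) ∧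
      x = ∑ k, xt k ∧ s = ∑ k, (dotp (w k) (xt k) + b k * z k)} m := by
  set F := Set.univ.pi (fun k => z k • C k) ∩ {xt : Fin d → Fin η → ℝ | x = ∑ k, xt k}
  have hF : IsCompact F :=
    (isCompact_univ_pi fun k => (hC k).smul (z k)).inter_right <|
      isClosed_eq continuous_const (by fun_prop)
  have himage : {s : ℝ | ∃ xt : Fin d → Fin η → ℝ, (∀ k, xt k ∈ z k • C k) ∧
      x = ∑ k, xt k ∧ s = ∑ k, (dotp (w k) (xt k) + b k * z k)} =
      (fun xt => ∑ k, (dotp (w k) (xt k) + b k * z k)) '' F := by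
    ext s
    simp [F, and_assoc, eq_comm]
  rw [himage]
  obtain ⟨xt, hxt⟩ := hne
  exact (hF.image (by unfold dotp; fun_prop)).exists_isGreatest
    ⟨_, xt, ⟨Set.mem_univ_pi.mpr hxt.1, hxt.2⟩, rfl⟩

section Decomposition

variable {η d : ℕ} (w : Fin d → Fin η → ℝ) (b : Fin d → ℝ) {z : Fin d → ℝ}

lemma sum_objective_smul_eq (hz : ∑ k, z k = 1) (y : Fin d → Fin η → ℝ) (ℓ : Fin d) :
    ∑ k, (dotp (w k) (z k • y k) + b k * z k) =
      affK w b ℓ (∑ k, z k • y k) + ∑ k, z k * (affK w b k (y k) - affK w b ℓ (y k)) := by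
  have hℓ : affK w b ℓ (∑ k, z k • y k) = ∑ k, z k * affK w b ℓ (y k) := by
    simp only [affK, dotp_eq_dotProduct, dotProduct_sum, dotProduct_smul, smul_eq_mul,
      mul_add, Finset.sum_add_distrib, ← Finset.sum_mul, hz, one_mul]
  rw [hℓ, ← Finset.sum_add_distrib]
  refine Finset.sum_congr rfl fun k _ => ?_
  simp only [affK, dotp_eq_dotProduct, dotProduct_smul, smul_eq_mul]
  ring

lemma affK_sum_le_of_mem_smul_DrestrK {D : Set (Fin η → ℝ)} (hz : z ∈ stdSimplex ℝ (Fin d))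
    {xt : Fin d → Fin η → ℝ} (hxt : ∀ k, xt k ∈ z k • DrestrK D w b k) (ℓ : Fin d) :
    affK w b ℓ (∑ k, xt k) ≤ ∑ k, (dotp (w k) (xt k) + b k * z k) := by
  choose y hy hxy using fun k => Set.mem_smul_set.mp (hxt k)
  obtain rfl : xt = fun k => z k • y k := funext fun k => (hxy k).symm
  rw [sum_objective_smul_eq w b hz.2 y ℓ, le_add_iff_nonneg_right]
  exact Finset.sum_nonneg fun k _ => mul_nonneg (hz.1 k) (sub_nonneg.mpr ((hy k).2 ℓ))

end Decomposition

lemma mem_smul_DrestrK_or_le_affK {η : ℕ} (w : Fin 2 → Fin η → ℝ) (b : Fin 2 → ℝ)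
    {D : Set (Fin η → ℝ)} {z : Fin 2 → ℝ} (hz : z ∈ stdSimplex ℝ (Fin 2))
    {xt : Fin 2 → Fin η → ℝ} (hxt : ∀ k, xt k ∈ z k • D) :
    (∀ k, xt k ∈ z k • DrestrK D w b k) ∨
      ∃ ℓ, ∑ k, (dotp (w k) (xt k) + b k * z k) ≤ affK w b ℓ (∑ k, xt k) := by
  choose y hy hxy using fun k => Set.mem_smul_set.mp (hxt k)
  obtain rfl : xt = fun k => z k • y k := funext fun k => (hxy k).symm
  by_cases hgap : ∀ k ℓ, k ≠ ℓ → 0 < z k * (affK w b k (y k) - affK w b ℓ (y k))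
  · refine Or.inl fun k => Set.smul_mem_smul_set ⟨hy k, fun ℓ => ?_⟩
    rcases eq_or_ne k ℓ with rfl | hkℓ
    · exact le_rfl
    · exact (sub_pos.mp (pos_of_mul_pos_right (hgap k ℓ hkℓ) (hz.1 k))).le
  · push Not at hgap
    obtain ⟨k, ℓ, hkℓ, hle⟩ := hgap
    refine Or.inr ⟨ℓ, ?_⟩
    rw [sum_objective_smul_eq w b hz.2 y ℓ, add_le_iff_nonpos_right,
      Finset.sum_eq_single k (fun j _ hjk => by simp [show j = ℓ by omega]) (by simp)]
    exact hle

theorem stmt6_general {η : ℕ}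
    (w : Fin 2 → Fin η → ℝ) (b : Fin 2 → ℝ)
    (D : Set (Fin η → ℝ))
    (hDpoly : ∃ (m : ℕ) (A : Fin m → Fin η → ℝ) (c : Fin m → ℝ),
      D = {x | ∀ i, dotp (A i) x ≤ c i})
    (hDbd : Bornology.IsBounded D)
    (x : Fin η → ℝ)
    (z : Fin 2 → ℝ) (hz : z ∈ stdSimplex ℝ (Fin 2))
    (hfeas : ∃ xt : Fin 2 → Fin η → ℝ,
      (∀ k, xt k ∈ z k • DrestrK D w b k) ∧ x = ∑ k, xt k) :
    ∃ m : ℝ,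
      IsGreatest
        {s : ℝ | ∃ xt : Fin 2 → Fin η → ℝ,
          (∀ k, xt k ∈ z k • DrestrK D w b k) ∧ x = ∑ k, xt k
          ∧ s = ∑ k, (dotp (w k) (xt k) + b k * z k)} m
      ∧ IsGreatest
          {s : ℝ | ∃ xt : Fin 2 → Fin η → ℝ,
            (∀ k, xt k ∈ z k • D) ∧ x = ∑ k, xt k
            ∧ s = ∑ k, (dotp (w k) (xt k) + b k * z k)} m := by
  have hDc : IsClosed D := by
    obtain ⟨_, A, c, rfl⟩ := hDpoly
    exact isClosed_setOf_forall_dotp_le A c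
  obtain ⟨m, hm⟩ :=
    exists_isGreatest_objective_of_isCompact (isCompact_DrestrK hDc hDbd w b) w b x z hfeas
  obtain ⟨xm, hxm, hxm_sum, rfl⟩ := hm.1
  refine ⟨_, hm,
    ⟨xm, fun k => Set.smul_set_mono (DrestrK_subset w b k) (hxm k), hxm_sum, rfl⟩, ?_⟩
  rintro _ ⟨xt, hxt, hxt_sum, rfl⟩
  rcases mem_smul_DrestrK_or_le_affK w b hz hxt with hres | ⟨ℓ, hle⟩
  · exact hm.2 ⟨xt, hres, hxt_sum, rfl⟩
  · calc _ ≤ affK w b ℓ x := hxt_sum ▸ hle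
      _ ≤ _ := hxm_sum ▸ affK_sum_le_of_mem_smul_DrestrK w b hz hxm ℓ

theorem stmt6 {η : ℕ} (hη : 1 ≤ η)
    (w : Fin 2 → Fin η → ℝ) (b : Fin 2 → ℝ)
    (D : Set (Fin η → ℝ))
    (hDpoly : ∃ (m : ℕ) (A : Fin m → Fin η → ℝ) (c : Fin m → ℝ),
      D = {x | ∀ i, dotp (A i) x ≤ c i})
    (hDne : D.Nonempty) (hDbd : Bornology.IsBounded D)
    (hirr : ∀ k, ∃ x ∈ D, ∀ ℓ, ℓ ≠ k → affK w b ℓ x < affK w b k x)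
    (x : Fin η → ℝ) (hx : x ∈ D)
    (z : Fin 2 → ℝ) (hz : z ∈ stdSimplex ℝ (Fin 2))
    (hfeas : ∃ xt : Fin 2 → Fin η → ℝ,
      (∀ k, xt k ∈ z k • DrestrK D w b k) ∧ x = ∑ k, xt k) :
    ∃ m : ℝ,
      IsGreatest
        {s : ℝ | ∃ xt : Fin 2 → Fin η → ℝ,
          (∀ k, xt k ∈ z k • DrestrK D w b k) ∧ x = ∑ k, xt k
          ∧ s = ∑ k, (dotp (w k) (xt k) + b k * z k)} m
      ∧ IsGreatest
          {s : ℝ | ∃ xt : Fin 2 → Fin η → ℝ,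
            (∀ k, xt k ∈ z k • D) ∧ x = ∑ k, xt k
            ∧ s = ∑ k, (dotp (w k) (xt k) + b k * z k)} m :=
  stmt6_general w b D hDpoly hDbd x z hz hfeas
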